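/- The set A_β is nonempty for β ∈ (0,1/2): there exist λ > 0 and a function v : T_m → ℝ with 0 < c ≤ v ≤ C for some constants c, C, such that Δ_β v(x) + λ v(x) ≤ 0 for all x ∈ T_m. In fact, v(x) = 1 + (|x| + a) p_β^{|x|} works for a sufficiently large, and then Δ_β v(x) ≤ 2β - 1 < 0 for all x ∈ T_m. -/

import Mathlib

open Filter Finset Topology

/-- The weight `p_β`: `1` if `β = 0`, and `β/(1-β)` otherwise. -/
noncomputable def pB (β : ℝ) : ℝ := if β = 0 then 1 else β / (1 - β)

/-- Vertices of the regular `m`-branching tree are finite sequences over `Fin m`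
(the root is `[]`, the successors of `x` are `i :: x`, the predecessor of `a :: t` is `t`,
and the level `|x|` is the list length).  The `β`-Laplacian on the tree. -/
noncomputable def lapB (m : ℕ) (β : ℝ) (u : List (Fin m) → ℝ) : List (Fin m) → ℝ
  | [] => (∑ i : Fin m, u [i]) / m - u []
  | a :: t =>
      (β * u t + (1 - β) * (∑ i : Fin m, u (i :: a :: t)) / m - u (a :: t)) *
        pB β ^ (-((a :: t).length : ℤ))

/-- A branch: an infinite path starting at the root, following successors. -/
def IsBranch (m : ℕ) (b : ℕ → List (Fin m)) : Prop :=
  b 0 = [] ∧ ∀ n, ∃ i : Fin m, b (n + 1) = i :: b n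

/-- Homogeneous Dirichlet boundary condition: `u → 0` along every branch. -/
def ZeroOnBoundary (m : ℕ) (u : List (Fin m) → ℝ) : Prop :=
  ∀ b : ℕ → List (Fin m), IsBranch m b → Tendsto (fun n => u (b n)) atTop (𝓝 0)

/-- `lam` is a principal eigenvalue of `Δ_β`: it is positive and admits a bounded
nonnegative nontrivial eigenfunction vanishing on the boundary. -/
def IsPrincipalEigenvalue (m : ℕ) (β lam : ℝ) : Prop :=
  0 < lam ∧ ∃ u : List (Fin m) → ℝ,
    (∃ M, ∀ x, |u x| ≤ M) ∧ (∀ x, 0 ≤ u x) ∧ u ≠ 0 ∧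
    (∀ x, -lapB m β u x = lam * u x) ∧ ZeroOnBoundary m u

/-- Membership in the set `A_β`. -/
def memA (m : ℕ) (β lam : ℝ) : Prop :=
  0 < lam ∧ ∃ v : List (Fin m) → ℝ, ∃ c C : ℝ, 0 < c ∧
    (∀ x, c < v x ∧ v x < C) ∧ ∀ x, lapB m β v x + lam * v x ≤ 0

/-- `λ₁(β) = sup A_β`. -/
noncomputable def lam1 (m : ℕ) (β : ℝ) : ℝ := sSup {lam | memA m β lam}

/-!
On functions constant on levels, `v x = h |x|`, the operator `Δ_β` is a second-order difference
weighted by `p_β^{-k}`. For the profile `h k = 1 + (k + a) pᵏ` the identity `(1 - β) p = β` makes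
this difference exactly `(2β - 1) p^{k+1}`, so `Δ_β v = 2β - 1` off the root, while at the root
`Δ_β v = a (p - 1) + p ≤ 2β - 1` once `a` is large. Since `1 ≤ v ≤ C := 1 + a + 1/(1 - p)`
(as `k pᵏ ≤ ∑_{i<k} pⁱ`), the eigenvalue `λ = (1 - 2β) / C` is admissible.
-/

section Weight

variable {β : ℝ}

lemma pB_of_pos (hβ : 0 < β) : pB β = β / (1 - β) := by
  simp [pB, hβ.ne']

lemma pB_pos (hβ0 : 0 < β) (hβ1 : β < 1) : 0 < pB β := by
  rw [pB_of_pos hβ0]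
  exact div_pos hβ0 (by linarith)

lemma pB_lt_one (hβ0 : 0 < β) (hβ1 : β < 1 / 2) : pB β < 1 := by
  rw [pB_of_pos hβ0, div_lt_one (by linarith)]
  linarith

lemma one_sub_mul_pB (hβ0 : 0 < β) (hβ1 : β < 1) : (1 - β) * pB β = β := by
  rw [pB_of_pos hβ0]
  field_simp [show 1 - β ≠ 0 by linarith]

end Weight

section LevelFunction

variable {m : ℕ} (β : ℝ) (h : ℕ → ℝ)

lemma lapB_comp_length_nil (hm : m ≠ 0) :
    lapB m β (fun y => h y.length) [] = h 1 - h 0 := by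
  simp [lapB, hm]

lemma lapB_comp_length_cons (hm : m ≠ 0) (i : Fin m) (t : List (Fin m)) :
    lapB m β (fun y => h y.length) (i :: t) =
      (β * (h t.length - h (t.length + 1)) + (1 - β) * (h (t.length + 2) - h (t.length + 1))) *
        pB β ^ (-((t.length + 1 : ℕ) : ℤ)) := by
  simp only [lapB, List.length_cons, sum_const, card_univ, Fintype.card_fin, nsmul_eq_mul]
  field_simp
  ring

end LevelFunction

lemma natCast_mul_pow_le {p : ℝ} (hp0 : 0 ≤ p) (hp1 : p < 1) (k : ℕ) :
    k * p ^ k ≤ 1 / (1 - p) :=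
  calc k * p ^ k = ∑ _i ∈ range k, p ^ k := by simp
    _ ≤ ∑ i ∈ range k, p ^ i :=
        sum_le_sum fun i hi => pow_le_pow_of_le_one hp0 hp1.le (mem_range.mp hi).le
    _ ≤ p ^ 0 / (1 - p) := by
        rw [range_eq_Ico]
        exact geom_sum_Ico_le_of_lt_one hp0 hp1
    _ = 1 / (1 - p) := by rw [pow_zero]

def testProfile (p a : ℝ) (k : ℕ) : ℝ := 1 + (k + a) * p ^ k

section TestProfile

variable {p a : ℝ}

lemma testProfile_step {β : ℝ} (hβp : (1 - β) * p = β) (k : ℕ) :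
    β * (testProfile p a k - testProfile p a (k + 1)) +
        (1 - β) * (testProfile p a (k + 2) - testProfile p a (k + 1)) =
      (2 * β - 1) * p ^ (k + 1) := by
  simp only [testProfile]
  push_cast
  linear_combination (-((k : ℝ) + a) * p ^ k + ((k : ℝ) + 2 + a) * p ^ (k + 1)) * hβp

lemma one_le_testProfile (hp : 0 ≤ p) (ha : 0 ≤ a) (k : ℕ) : 1 ≤ testProfile p a k := by
  unfold testProfile
  have : 0 ≤ (k + a) * p ^ k := by positivity
  linarith

lemma testProfile_le (hp0 : 0 ≤ p) (hp1 : p < 1) (ha : 0 ≤ a) (k : ℕ) :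
    testProfile p a k ≤ 1 + a + 1 / (1 - p) := by
  have hk := natCast_mul_pow_le hp0 hp1 k
  have hpk : a * p ^ k ≤ a := mul_le_of_le_one_right ha (pow_le_one₀ hp0 hp1.le)
  unfold testProfile
  linarith

end TestProfile

lemma lapB_testProfile_le {m : ℕ} (hm : m ≠ 0) {β : ℝ} (hβ0 : 0 < β) (hβ1 : β < 1 / 2)
    {a : ℝ} (ha : (pB β + 1 - 2 * β) / (1 - pB β) ≤ a) :
    ∀ x : List (Fin m), lapB m β (fun y => testProfile (pB β) a y.length) x ≤ 2 * β - 1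
  | [] => by
    have hp1 := pB_lt_one hβ0 hβ1
    rw [div_le_iff₀ (by linarith)] at ha
    rw [lapB_comp_length_nil β _ hm]
    simp only [testProfile]
    push_cast
    linarith
  | i :: t => by
    have hp0 := pB_pos hβ0 (by linarith)
    rw [lapB_comp_length_cons β _ hm, testProfile_step (one_sub_mul_pB hβ0 (by linarith)),
      mul_assoc, zpow_neg, zpow_natCast, mul_inv_cancel₀ (by positivity), mul_one]

theorem stmt10 (m : ℕ) (hm : 2 ≤ m) (β : ℝ) (hβ0 : 0 < β) (hβ1 : β < 1 / 2) :
    (∃ lam > (0 : ℝ), ∃ v : List (Fin m) → ℝ, ∃ c C : ℝ, 0 < c ∧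
      (∀ x, c ≤ v x ∧ v x ≤ C) ∧ ∀ x, lapB m β v x + lam * v x ≤ 0) ∧
    (∃ a₀ : ℝ, ∀ a ≥ a₀, ∀ x : List (Fin m),
      lapB m β (fun y => 1 + ((y.length : ℝ) + a) * pB β ^ y.length) x ≤ 2 * β - 1) := by
  have hm0 : m ≠ 0 := by omega
  have hp0 := (pB_pos hβ0 (by linarith)).le
  have hp1 := pB_lt_one hβ0 hβ1
  set a₀ := (pB β + 1 - 2 * β) / (1 - pB β)
  refine ⟨?_, a₀, fun a ha => lapB_testProfile_le hm0 hβ0 hβ1 ha⟩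
  set a := max a₀ 0
  set C := 1 + a + 1 / (1 - pB β)
  have ha0 : 0 ≤ a := le_max_right _ _
  have hC : 0 < C := by positivity
  refine ⟨(1 - 2 * β) / C, div_pos (by linarith) hC, fun y => testProfile (pB β) a y.length,
    1, C, one_pos, fun x => ⟨one_le_testProfile hp0 ha0 _, testProfile_le hp0 hp1 ha0 _⟩,
    fun x => ?_⟩
  have hlap := lapB_testProfile_le hm0 hβ0 hβ1 (le_max_left a₀ 0) x
  have hv : (1 - 2 * β) / C * testProfile (pB β) a x.length ≤ (1 - 2 * β) / C * C :=
    mul_le_mul_of_nonneg_left (testProfile_le hp0 hp1 ha0 _) (div_pos (by linarith) hC).le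
  rw [div_mul_cancel₀ _ hC.ne'] at hv
  linarith
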